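/- arXiv:2009.08865 — 3 statements merged into one kernel-verified Lean document; each statement's English description precedes it below -/
import Mathlib

section
/- The map sending a permutation to its odd diagram is injective on the set of 312-avoiding permutations in S_n: if v ≠ w both avoid the pattern 312, then D_o(v) ≠ D_o(w). -/
def oddDiagram {n : ℕ} (w : Equiv.Perm (Fin n)) : Finset (Fin n × Fin n) :=
  Finset.univ.filter (fun p => (p.2 : ℕ) < (w p.1 : ℕ) ∧ (p.1 : ℕ) < (w.symm p.2 : ℕ) ∧
    (p.1 : ℕ) % 2 ≠ (w.symm p.2 : ℕ) % 2)

def invLength {n : ℕ} (w : Equiv.Perm (Fin n)) : ℕ :=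
  (Finset.univ.filter (fun p : Fin n × Fin n => p.1 < p.2 ∧ w p.2 < w p.1)).card

def bruhatLE {n : ℕ} : Equiv.Perm (Fin n) → Equiv.Perm (Fin n) → Prop :=
  Relation.ReflTransGen (fun u v => ∃ t : Equiv.Perm (Fin n), t.IsSwap ∧ v = u * t ∧ invLength u < invLength v)

def contains213 {n : ℕ} (w : Equiv.Perm (Fin n)) : Prop :=
  ∃ i h j : Fin n, i < h ∧ h < j ∧ w h < w i ∧ w i < w j

def contains312 {n : ℕ} (w : Equiv.Perm (Fin n)) : Prop :=
  ∃ i h j : Fin n, i < h ∧ h < j ∧ w h < w j ∧ w j < w i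

/-!
Let `i` be the first position where `v` and `w` differ, say `v i < w i`, and let `p = w⁻¹ (v i)`,
so that `i < p`. No cell `(a, v b)` with `b ≤ a` lies in `D_o(v)`. Hence the cell `(i, v i)`, which
lies in `D_o(w)` as soon as `i` and `p` have different parities, forces `p ≡ i (mod 2)` and thus
`i + 1 < p`. Since `w` avoids 312, the triple `i < i + 1 < p` gives `w (i + 1) > w p = v i`,
so the cell `(i + 1, v i)` lies in `D_o(w)` but not in `D_o(v)`.
-/

variable {n : ℕ}

@[simp]
lemma mem_oddDiagram (w : Equiv.Perm (Fin n)) (p : Fin n × Fin n) :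
    p ∈ oddDiagram w ↔ (p.2 : ℕ) < w p.1 ∧ (p.1 : ℕ) < w.symm p.2 ∧
      (p.1 : ℕ) % 2 ≠ (w.symm p.2 : ℕ) % 2 := by
  simp [oddDiagram]

lemma mk_apply_notMem_oddDiagram {a b : Fin n} (w : Equiv.Perm (Fin n)) (hba : b ≤ a) :
    (a, w b) ∉ oddDiagram w := by
  simp only [mem_oddDiagram, Equiv.symm_apply_apply, not_and]
  intro _ hab
  exact absurd hba (not_le.mpr hab)

lemma exists_first_ne {α β : Type*} [Preorder α] [WellFoundedLT α] {v w : α → β}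
    (hne : v ≠ w) : ∃ i, v i ≠ w i ∧ Set.EqOn v w (Set.Iio i) := by
  obtain ⟨i, hi, hmin⟩ := wellFounded_lt.has_min {j | v j ≠ w j}
    (by simpa [Set.Nonempty, funext_iff] using hne)
  exact ⟨i, hi, fun j hj => by_contra fun hvw => hmin j hvw hj⟩

lemma lt_symm_apply_of_eqOn_of_ne {α : Type*} [LinearOrder α] {v w : Equiv.Perm α} {i : α}
    (hagree : Set.EqOn v w (Set.Iio i)) (hne : v i ≠ w i) : i < w.symm (v i) := by
  by_contra! hle
  rcases hle.lt_or_eq with hlt' | heq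
  · have := hagree hlt'
    rw [Equiv.apply_symm_apply, v.injective.eq_iff] at this
    exact hlt'.ne this
  · have hwi := w.apply_symm_apply (v i)
    rw [heq] at hwi
    exact hne hwi.symm

lemma oddDiagram_ne_of_eqOn_of_lt {v w : Equiv.Perm (Fin n)} (hw : ¬ contains312 w) {i : Fin n}
    (hagree : Set.EqOn v w (Set.Iio i)) (hlt : v i < w i) : oddDiagram v ≠ oddDiagram w := by
  intro heq
  set p := w.symm (v i)
  have hwp : w p = v i := w.apply_symm_apply (v i)
  have hip : i < p := lt_symm_apply_of_eqOn_of_ne hagree hlt.ne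
  have hpar : (i : ℕ) % 2 = (p : ℕ) % 2 := by
    by_contra hpar
    have hmem : (i, v i) ∈ oddDiagram w := (mem_oddDiagram _ _).mpr ⟨hlt, hip, hpar⟩
    exact mk_apply_notMem_oddDiagram v le_rfl (heq ▸ hmem)
  have hip2 : (i : ℕ) + 1 < p := by
    have := Fin.lt_def.mp hip
    omega
  set h : Fin n := ⟨i + 1, hip2.trans p.isLt⟩
  have hih : i < h := Fin.lt_def.mpr (Nat.lt_succ_self _)
  have hhp : h < p := Fin.lt_def.mpr hip2
  have hwh : v i < w h := by
    by_contra! hle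
    rw [← hwp] at hle hlt
    exact hw ⟨i, h, p, hih, hhp, hle.lt_of_ne (w.injective.ne hhp.ne), hlt⟩
  have hmem : (h, v i) ∈ oddDiagram w := by
    refine (mem_oddDiagram _ _).mpr ⟨hwh, hhp, ?_⟩
    simp only [h]
    omega
  exact mk_apply_notMem_oddDiagram v hih.le (heq ▸ hmem)

theorem stmt3 {n : ℕ} (v w : Equiv.Perm (Fin n)) (hv : ¬ contains312 v)
    (hw : ¬ contains312 w) (hne : v ≠ w) :
    oddDiagram v ≠ oddDiagram w := by
  obtain ⟨i, hdiff, hagree⟩ := exists_first_ne (DFunLike.coe_injective.ne hne)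
  rcases hdiff.lt_or_gt with hlt | hgt
  · exact oddDiagram_ne_of_eqOn_of_lt hw hagree hlt
  · exact (oddDiagram_ne_of_eqOn_of_lt hv hagree.symm hgt).symm
end

section
/- Suppose v ~ w with v ≠ w (same odd diagram). Let k+1 be minimal with v^{-1}(k+1) ≠ w^{-1}(k+1), and assume b := v^{-1}(k+1) < c := w^{-1}(k+1). Then v̄ := v·(b c) satisfies D_o(v̄) = D_o(v) and ℓ(v̄) > ℓ(v), where ℓ denotes the number of inversions. -/
/-!
Put `b = v⁻¹ k` and `c = w⁻¹ k`. As `v` and `w` place the values below `k` at the same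
positions, comparing the two odd diagrams at the cells `(b, k)`, `(i, k)` and `(c, v i)` shows
that `b ≡ c (mod 2)`, that `v i < k` for every `b < i < c` of the other parity than `c`, and that
every `i > c` with `k < v i < v c` has the parity of `c`. These are exactly the conditions under
which the transposition of the positions `b` and `c` leaves the odd diagram unchanged. The length
goes up because `v b = k < v c`: sorting the swapped pair maps the inversions of `v` injectively
into those of `v * (b c)`, missing the new inversion `(b, c)`.
-/

open Equiv

variable {n : ℕ}

def inversions (u : Perm (Fin n)) : Finset (Fin n × Fin n) :=
  Finset.univ.filter fun p => p.1 < p.2 ∧ u p.2 < u p.1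

lemma mem_inversions {u : Perm (Fin n)} {p : Fin n × Fin n} :
    p ∈ inversions u ↔ p.1 < p.2 ∧ u p.2 < u p.1 := by
  simp [inversions]

lemma invLength_eq_card_inversions (u : Perm (Fin n)) : invLength u = (inversions u).card := rfl

lemma apply_swap_lt_apply_swap {u : Perm (Fin n)} {b c i j : Fin n} (hbc : b < c) (hu : u b < u c)
    (hij : i < j) (hji : u j < u i) (hs : swap b c j ≤ swap b c i) :
    u (swap b c j) < u (swap b c i) := by
  -- The swap reverses only the pairs `(b, j)` with `j ≤ c` and `(i, c)` with `b ≤ i`.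
  rw [swap_apply_def, swap_apply_def] at hs ⊢
  split_ifs at hs ⊢ <;> subst_vars <;> omega

theorem invLength_lt_mul_swap {u : Perm (Fin n)} {b c : Fin n} (hbc : b < c) (hu : u b < u c) :
    invLength u < invLength (u * swap b c) := by
  -- `ψ` is an involution on increasing pairs.
  let ψ : Fin n × Fin n → Fin n × Fin n := fun p =>
    if swap b c p.1 < swap b c p.2 then (swap b c p.1, swap b c p.2) else p
  have hψ : Set.LeftInvOn ψ ψ {p | p.1 < p.2} := by
    intro p (hp : p.1 < p.2)
    by_cases h : swap b c p.1 < swap b c p.2 <;> simp [ψ, h, hp]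
  have hmaps : Set.MapsTo ψ (inversions u) ((inversions (u * swap b c)).erase (b, c)) := by
    rintro ⟨i, j⟩ hp
    obtain ⟨hij, hji⟩ := mem_inversions.1 hp
    by_cases h : swap b c i < swap b c j
    · simp only [Finset.mem_coe, ψ, if_pos h, Finset.mem_erase, ne_eq, Prod.mk.injEq,
        mem_inversions, Perm.mul_apply, swap_apply_self, swap_apply_eq_iff, swap_apply_left,
        swap_apply_right]
      exact ⟨fun h' => absurd (h'.1 ▸ h'.2 ▸ hij) hbc.not_gt, h, hji⟩
    · simp only [Finset.mem_coe, ψ, if_neg h, Finset.mem_erase, ne_eq, Prod.mk.injEq,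
        mem_inversions, Perm.mul_apply]
      exact ⟨fun h' => absurd (h'.1 ▸ h'.2 ▸ hji) hu.not_gt, hij,
        apply_swap_lt_apply_swap hbc hu hij hji (not_lt.1 h)⟩
  rw [invLength_eq_card_inversions, invLength_eq_card_inversions]
  calc (inversions u).card ≤ ((inversions (u * swap b c)).erase (b, c)).card :=
        Finset.card_le_card_of_injOn ψ hmaps
          (hψ.injOn.mono fun p hp => (mem_inversions.1 hp).1)
    _ < (inversions (u * swap b c)).card :=
        Finset.card_erase_lt_of_mem (mem_inversions.2 (by simpa using ⟨hbc, hu⟩))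

lemma mem_oddDiagram_s7 {u : Perm (Fin n)} {i j : Fin n} :
    (i, j) ∈ oddDiagram u ↔
      j < u i ∧ i < u.symm j ∧ (i : ℕ) % 2 ≠ (u.symm j : ℕ) % 2 := by
  simp only [oddDiagram, Finset.mem_filter, Finset.mem_univ, true_and, Fin.lt_def]

lemma mk_apply_mem_oddDiagram {u : Perm (Fin n)} {i t : Fin n} :
    (i, u t) ∈ oddDiagram u ↔ u t < u i ∧ i < t ∧ (i : ℕ) % 2 ≠ (t : ℕ) % 2 := by
  rw [mem_oddDiagram_s7, symm_apply_apply]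

theorem oddDiagram_mul_swap_eq {v : Perm (Fin n)} {b c : Fin n} (hbc : b < c) (hv : v b < v c)
    (hpar : (b : ℕ) % 2 = c % 2)
    (hbetween : ∀ i, b < i → i < c → (i : ℕ) % 2 ≠ c % 2 → v i < v b)
    (habove : ∀ i, c < i → v b < v i → v i < v c → (i : ℕ) % 2 = c % 2) :
    oddDiagram (v * swap b c) = oddDiagram v := by
  ext ⟨i, j⟩
  obtain ⟨t, rfl⟩ := v.surjective j
  have ht : v t = (v * swap b c) (swap b c t) := by simp
  conv_lhs => rw [ht]
  rw [mk_apply_mem_oddDiagram, mk_apply_mem_oddDiagram, Perm.mul_apply, Perm.mul_apply,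
    swap_apply_self]
  -- Writing `j = v t`, the parity of `t` is unchanged by the swap since `b ≡ c`; what is left
  -- is a case check on whether `i` and `t` lie in `{b, c}`.
  have hinj : ∀ x, x ≠ b → v x ≠ v b := fun x hx => v.injective.ne hx
  have := hbetween i; have := hbetween t; have := habove i; have := habove t
  have := hinj i; have := hinj t
  rw [swap_apply_def, swap_apply_def]
  split_ifs <;> subst_vars <;> omega

section FirstDifference

variable {v w : Perm (Fin n)} {k : Fin n}

lemma le_apply_of_le_apply (hmin : ∀ m < k, v.symm m = w.symm m) {i : Fin n} (h : k ≤ v i) :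
    k ≤ w i := by
  by_contra! hw
  have hwv : w i = v i := by simpa using congrArg v (hmin _ hw)
  exact h.not_gt (hwv ▸ hw)

lemma lt_apply_symm (hmin : ∀ m < k, w.symm m = v.symm m) (hne : v.symm k ≠ w.symm k) :
    k < v (w.symm k) :=
  (le_apply_of_le_apply hmin (w.apply_symm_apply k).ge).lt_of_ne
    fun h => hne (v.symm_apply_eq.2 h)

lemma symm_mod_two_eq (hsim : oddDiagram v = oddDiagram w)
    (hmin : ∀ m < k, v.symm m = w.symm m) (hbc : v.symm k < w.symm k) :
    (v.symm k : ℕ) % 2 = (w.symm k : ℕ) % 2 := by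
  by_contra h
  have hwb : k < w (v.symm k) := lt_apply_symm hmin hbc.ne'
  have hmem : (v.symm k, k) ∈ oddDiagram w := mem_oddDiagram_s7.2 ⟨hwb, hbc, h⟩
  rw [← hsim, mem_oddDiagram_s7] at hmem
  exact lt_irrefl _ hmem.2.1

lemma apply_lt_of_mem_Ioo (hsim : oddDiagram v = oddDiagram w)
    (hmin : ∀ m < k, v.symm m = w.symm m) {i : Fin n} (hi : i ∈ Set.Ioo (v.symm k) (w.symm k))
    (hpar : (i : ℕ) % 2 ≠ (w.symm k : ℕ) % 2) : v i < k := by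
  obtain ⟨hbi, hic⟩ := hi
  by_contra! hki
  have hwi : k < w i :=
    (le_apply_of_le_apply hmin hki).lt_of_ne fun h => hic.ne (w.symm_apply_eq.2 h).symm
  have hmem : (i, k) ∈ oddDiagram w := mem_oddDiagram_s7.2 ⟨hwi, hic, hpar⟩
  rw [← hsim, mem_oddDiagram_s7] at hmem
  exact hbi.not_gt hmem.2.1

lemma mod_two_eq_of_apply_mem_Ioo (hsim : oddDiagram v = oddDiagram w) {i : Fin n}
    (hci : w.symm k < i) (hi : v i ∈ Set.Ioo k (v (w.symm k))) :
    (i : ℕ) % 2 = (w.symm k : ℕ) % 2 := by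
  obtain ⟨hki, hic⟩ := hi
  by_contra h
  have hmem : (w.symm k, v i) ∈ oddDiagram v :=
    mk_apply_mem_oddDiagram.2 ⟨hic, hci, Ne.symm h⟩
  rw [hsim, mem_oddDiagram_s7, w.apply_symm_apply] at hmem
  exact hki.not_gt hmem.1

end FirstDifference

theorem stmt7_general {n : ℕ} (v w : Equiv.Perm (Fin n)) (hsim : oddDiagram v = oddDiagram w)
    (k : Fin n)
    (hmin : ∀ m : Fin n, m < k → v.symm m = w.symm m)
    (hbc : v.symm k < w.symm k) :
    oddDiagram (v * Equiv.swap (v.symm k) (w.symm k)) = oddDiagram v ∧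
      invLength v < invLength (v * Equiv.swap (v.symm k) (w.symm k)) := by
  have hvb : v (v.symm k) = k := v.apply_symm_apply k
  have hvc : v (v.symm k) < v (w.symm k) := by
    rw [hvb]
    exact lt_apply_symm (fun m hm => (hmin m hm).symm) hbc.ne
  refine ⟨oddDiagram_mul_swap_eq hbc hvc (symm_mod_two_eq hsim hmin hbc) ?_ ?_,
    invLength_lt_mul_swap hbc hvc⟩
  · intro i hbi hic hpar
    rw [hvb]
    exact apply_lt_of_mem_Ioo hsim hmin ⟨hbi, hic⟩ hpar
  · intro i hci hbi hic
    rw [hvb] at hbi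
    exact mod_two_eq_of_apply_mem_Ioo hsim hci ⟨hbi, hic⟩

theorem stmt7 {n : ℕ} (v w : Equiv.Perm (Fin n)) (hsim : oddDiagram v = oddDiagram w)
    (hne : v ≠ w) (k : Fin n)
    (hmin : ∀ m : Fin n, m < k → v.symm m = w.symm m)
    (hk : v.symm k ≠ w.symm k) (hbc : v.symm k < w.symm k) :
    oddDiagram (v * Equiv.swap (v.symm k) (w.symm k)) = oddDiagram v ∧
      invLength v < invLength (v * Equiv.swap (v.symm k) (w.symm k)) :=
  stmt7_general v w hsim k hmin hbc
end

section
/- Let D be an odd diagram arising from some permutation in S_n, and let v be the Bruhat-maximal element of Perm_n(D) = {z : D_o(z) = D}. If w in Perm_n(D) and w ≠ v, then there exists a transposition t such that D_o(wt) = D and wt covers w in Bruhat order (ℓ(wt) = ℓ(w) + 1). -/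
/-!
Let `a` be the first position where `w` and `v` differ. Equal odd diagrams force `w⁻¹` and `v⁻¹`
to agree modulo `2`: at the first disagreement one of the two permutations can be swapped
towards the other without changing its odd diagram, so induction on the number of disagreements
applies. Granting this, if `w a < v a` then swapping position `a` of `w` with the position of the
value `v a` preserves the odd diagram and goes up in Bruhat order, and moving the partner of `a`
to the nearest admissible position makes the step a cover. If `w a > v a`, the same construction
applied to `v` yields an element with the odd diagram of `v` and larger length, contradicting the
maximality of `v`.
-/

open Equiv

section FirstDifference

variable {α β : Type*} [LinearOrder α]

lemma exists_eqOn_Iio_ne [WellFoundedLT α] {f g : α → β} (h : f ≠ g) :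
    ∃ a, f a ≠ g a ∧ Set.EqOn f g (Set.Iio a) := by
  obtain ⟨i, hi⟩ := Function.ne_iff.mp h
  obtain ⟨a, ha, hmin⟩ := wellFounded_lt.has_min {i | f i ≠ g i} ⟨i, hi⟩
  exact ⟨a, ha, fun i hi => by_contra fun hne => hmin i hne hi⟩

lemma le_of_apply_eq_of_eqOn_Iio {f g : α → β} (hf : Function.Injective f) {a c q : α}
    (hagree : Set.EqOn f g (Set.Iio a)) (hq : a ≤ q) (h : g c = f q) : a ≤ c := by
  by_contra! hc
  exact (hf ((hagree hc).trans h) ▸ hc).not_ge hq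

end FirstDifference

section OddDiagram

variable {n : ℕ}

lemma mem_oddDiagram_apply (w : Perm (Fin n)) (i p : Fin n) :
    (i, w p) ∈ oddDiagram w ↔ w p < w i ∧ i < p ∧ (i : ℕ) % 2 ≠ (p : ℕ) % 2 := by
  simp only [oddDiagram, Finset.mem_filter, Finset.mem_univ, true_and, symm_apply_apply,
    Fin.lt_def]

lemma swap_apply_mod_two {a b : Fin n} (h : (a : ℕ) % 2 = (b : ℕ) % 2) (x : Fin n) :
    (swap a b x : ℕ) % 2 = (x : ℕ) % 2 := by
  rw [swap_apply_def]; split_ifs <;> omega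

lemma mul_swap_symm_apply (w : Perm (Fin n)) (a b m : Fin n) :
    (w * swap a b).symm m = swap a b (w.symm m) := by
  rw [← Perm.inv_def, mul_inv_rev, swap_inv, Perm.mul_apply, Perm.inv_def]

def IsOddDiagramSwap (w : Perm (Fin n)) (a b : Fin n) : Prop :=
  a < b ∧ (a : ℕ) % 2 = (b : ℕ) % 2 ∧ w a < w b ∧
    ∀ q, a < q → (q : ℕ) % 2 ≠ (a : ℕ) % 2 → w q < w a ∨ (b < q ∧ w b < w q)

lemma oddDiagram_mul_swap {w : Perm (Fin n)} {a b : Fin n} (h : IsOddDiagramSwap w a b) :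
    oddDiagram (w * swap a b) = oddDiagram w := by
  obtain ⟨hab, hpar, hw, hkey⟩ := h
  ext ⟨i, m⟩
  obtain ⟨p, rfl⟩ := (w * swap a b).surjective m
  have hp := hkey p
  have hi := hkey i
  rw [mem_oddDiagram_apply, Perm.mul_apply w, mem_oddDiagram_apply, swap_apply_mod_two hpar]
  simp only [Perm.mul_apply, swap_apply_def]
  split_ifs <;> subst_vars <;> omega

lemma invLength_mul_swap {w : Perm (Fin n)} {a b : Fin n} (hab : a < b) (hw : w a < w b)
    (hcover : ∀ i, a < i → i < b → w i < w a ∨ w b < w i) :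
    invLength (w * swap a b) = invLength w + 1 := by
  set s := swap a b
  -- `φ` relabels a pair through `s` unless that reverses its order; off `(a, b)` it matches the
  -- inversions of `w * s` with those of `w`, the cover condition handling pairs inside `(a, b)`.
  let φ : Fin n × Fin n → Fin n × Fin n := fun p => if s p.1 < s p.2 then (s p.1, s p.2) else p
  have hφ : ∀ p : Fin n × Fin n, p.1 < p.2 → p ≠ (a, b) →
      (φ p).1 < (φ p).2 ∧ φ p ≠ (a, b) ∧ (w (s p.2) < w (s p.1) ↔ w (φ p).2 < w (φ p).1) := by
    rintro ⟨x, y⟩ hxy hne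
    have hx := hcover x
    have hy := hcover y
    simp only [φ, s] at hne ⊢
    split_ifs with h <;> simp only [ne_eq, Prod.mk.injEq] at hxy hne h ⊢ <;>
      simp only [swap_apply_def] at h ⊢ <;> split_ifs at h ⊢ <;> subst_vars <;>
      (try simp only [and_true]) <;> omega
  have hφφ : ∀ p : Fin n × Fin n, p.1 < p.2 → φ (φ p) = p := by
    rintro ⟨x, y⟩ hxy
    by_cases h : s x < s y
    · simp [φ, h, hxy, s]
    · simp [φ, h]
  have hab_mem : (a, b) ∈ Finset.univ.filter
      (fun p : Fin n × Fin n => p.1 < p.2 ∧ (w * s) p.2 < (w * s) p.1) := by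
    refine Finset.mem_filter.mpr ⟨Finset.mem_univ _, hab, ?_⟩
    simpa [s] using hw
  rw [invLength, invLength, ← Finset.card_erase_add_one hab_mem]
  congr 1
  apply Finset.card_bij' (fun p _ => φ p) (fun p _ => φ p)
  all_goals simp only [Finset.mem_erase, Finset.mem_filter, Finset.mem_univ, true_and]
  · rintro p ⟨hne, hlt, hinv⟩
    obtain ⟨hlt', hne', hiff⟩ := hφ p hlt hne
    exact ⟨hlt', hiff.mp hinv⟩
  · rintro p ⟨hlt, hinv⟩
    have hne : p ≠ (a, b) := by rintro rfl; exact absurd hinv (not_lt.mpr hw.le)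
    obtain ⟨hlt', hne', -⟩ := hφ p hlt hne
    obtain ⟨-, -, hiff⟩ := hφ (φ p) hlt' hne'
    rw [hφφ p hlt] at hiff
    exact ⟨hne', hlt', hiff.mpr hinv⟩
  · exact fun p hp => hφφ p hp.2.1
  · exact fun p hp => hφφ p hp.1

lemma IsOddDiagramSwap.exists_cover {w : Perm (Fin n)} {a b : Fin n}
    (h : IsOddDiagramSwap w a b) :
    ∃ b', IsOddDiagramSwap w a b' ∧ ∀ i, a < i → i < b' → w i < w a ∨ w b' < w i := by
  obtain ⟨b', hb', hmin⟩ := wellFounded_lt.has_min {c | IsOddDiagramSwap w a c} ⟨b, h⟩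
  refine ⟨b', hb', fun i hai hib => ?_⟩
  obtain ⟨-, -, -, hkey⟩ := hb'
  by_contra! hmid
  have hia : w i ≠ w a := w.injective.ne hai.ne'
  have hib' : w i ≠ w b' := w.injective.ne hib.ne
  have hipar : (a : ℕ) % 2 = (i : ℕ) % 2 := by
    by_contra hne
    have := hkey i hai (Ne.symm hne)
    omega
  refine hmin i ⟨hai, hipar, by omega, fun q haq hq => ?_⟩ hib
  have := hkey q haq hq
  omega

lemma mod_two_eq_and_oddDiagram_mul_swap_eq {w z : Perm (Fin n)}
    (hD : oddDiagram w = oddDiagram z) {a : Fin n} (hagree : Set.EqOn w z (Set.Iio a))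
    (hlt : w a < z a) :
    (a : ℕ) % 2 = (z.symm (w a) : ℕ) % 2 ∧
      oddDiagram (z * swap a (z.symm (w a))) = oddDiagram z := by
  set c := z.symm (w a)
  have hzc : z c = w a := z.apply_symm_apply _
  have hca : c ≠ a := fun h => by rw [h] at hzc; omega
  have hac : a < c :=
    lt_of_le_of_ne (le_of_apply_eq_of_eqOn_Iio w.injective hagree le_rfl hzc) hca.symm
  have hpar : (a : ℕ) % 2 = (c : ℕ) % 2 := by
    by_contra hne
    have := (mem_oddDiagram_apply z a c).mpr ⟨by omega, hac, hne⟩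
    rw [← hD, hzc, mem_oddDiagram_apply] at this
    exact lt_irrefl _ this.1
  have hswap : IsOddDiagramSwap (z * swap a c) a c := by
    simp only [IsOddDiagramSwap, Perm.mul_apply, swap_apply_left, swap_apply_right]
    refine ⟨hac, hpar, by omega, fun q haq hq => ?_⟩
    have hqc : q ≠ c := by rintro rfl; omega
    rw [swap_apply_of_ne_of_ne haq.ne' hqc]
    have hza : z q ≠ z a := z.injective.ne haq.ne'
    have hzc' : z q ≠ z c := z.injective.ne hqc
    have h1 : ¬ (w a < z q ∧ z q < z a) := fun h => by
      have := (mem_oddDiagram_apply z a q).mpr ⟨h.2, haq, by omega⟩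
      obtain ⟨p, hp⟩ := w.surjective (z q)
      rw [← hD, ← hp, mem_oddDiagram_apply] at this
      omega
    have h2 : ¬ (z a < z q ∧ q < c) := fun h => by
      have := (mem_oddDiagram_apply z q c).mpr ⟨by omega, h.2, by omega⟩
      rw [← hD, hzc, mem_oddDiagram_apply] at this
      omega
    omega
  refine ⟨hpar, ?_⟩
  have := oddDiagram_mul_swap hswap
  rwa [mul_assoc, swap_mul_self, mul_one, eq_comm] at this

lemma symm_apply_mod_two_eq_of_oddDiagram_eq {w z : Perm (Fin n)}
    (hD : oddDiagram w = oddDiagram z) (m : Fin n) :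
    (w.symm m : ℕ) % 2 = (z.symm m : ℕ) % 2 := by
  -- `(z⁻¹ * w).support` is the set of positions where `w` and `z` disagree.
  induction hN : (z⁻¹ * w).support.card using Nat.strong_induction_on generalizing w z with
  | _ N ih =>
  obtain rfl | hne := eq_or_ne w z
  · rfl
  obtain ⟨a, ha, hagree⟩ := exists_eqOn_Iio_ne (DFunLike.coe_injective.ne hne)
  wlog hlt : w a < z a generalizing w z
  · have hN' : (w⁻¹ * z).support.card = N := by
      rw [← hN, ← Perm.support_inv, mul_inv_rev, inv_inv]
    exact (this hD.symm hN' hne.symm ha.symm hagree.symm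
      (lt_of_le_of_ne (not_lt.mp hlt) ha.symm)).symm
  obtain ⟨hpar, hD'⟩ := mod_two_eq_and_oddDiagram_mul_swap_eq hD hagree hlt
  have hcard : ((z * swap a (z.symm (w a)))⁻¹ * w).support.card < N := by
    rw [← hN, mul_inv_rev, swap_inv, mul_assoc]
    refine Perm.card_support_swap_mul (f := z⁻¹ * w) (x := a) ?_
    rw [Perm.mul_apply, Ne, Perm.inv_eq_iff_eq]
    exact ha
  rw [ih _ hcard (hD.trans hD'.symm) rfl, mul_swap_symm_apply, swap_apply_mod_two hpar]

lemma isOddDiagramSwap_of_lt {w z : Perm (Fin n)} (hD : oddDiagram w = oddDiagram z) {a : Fin n}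
    (hagree : Set.EqOn w z (Set.Iio a)) (hlt : w a < z a) :
    IsOddDiagramSwap w a (w.symm (z a)) := by
  set b := w.symm (z a)
  have hwb : w b = z a := w.apply_symm_apply _
  have hba : b ≠ a := fun h => by rw [h] at hwb; omega
  have hab : a < b :=
    lt_of_le_of_ne (le_of_apply_eq_of_eqOn_Iio z.injective hagree.symm le_rfl hwb) hba.symm
  have hpar : (a : ℕ) % 2 = (b : ℕ) % 2 := by
    have := symm_apply_mod_two_eq_of_oddDiagram_eq hD (z a)
    rwa [symm_apply_apply, eq_comm] at this
  refine ⟨hab, hpar, by omega, fun q haq hq => ?_⟩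
  have hqb : q ≠ b := by rintro rfl; omega
  have hwa : w q ≠ w a := w.injective.ne haq.ne'
  have hwb' : w q ≠ w b := w.injective.ne hqb
  have h1 : ¬ (w a < w q ∧ w q < z a) := fun h => by
    obtain ⟨e, he⟩ := z.surjective (w q)
    have hae : a < e := lt_of_le_of_ne (le_of_apply_eq_of_eqOn_Iio w.injective hagree haq.le he)
      (by rintro rfl; omega)
    have hepar := symm_apply_mod_two_eq_of_oddDiagram_eq hD (w q)
    rw [symm_apply_apply, ← he, symm_apply_apply] at hepar
    have := (mem_oddDiagram_apply z a e).mpr ⟨by omega, hae, by omega⟩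
    rw [← hD, he, mem_oddDiagram_apply] at this
    omega
  have h2 : ¬ (z a < w q ∧ q < b) := fun h => by
    have := (mem_oddDiagram_apply w q b).mpr ⟨by omega, h.2, by omega⟩
    rw [hD, hwb, mem_oddDiagram_apply] at this
    omega
  omega

lemma exists_swap_cover_of_lt {w z : Perm (Fin n)} (hD : oddDiagram w = oddDiagram z)
    {a : Fin n} (hagree : Set.EqOn w z (Set.Iio a)) (hlt : w a < z a) :
    ∃ t : Perm (Fin n), t.IsSwap ∧ oddDiagram (w * t) = oddDiagram w ∧
      invLength (w * t) = invLength w + 1 := by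
  obtain ⟨b, hswap, hcover⟩ := (isOddDiagramSwap_of_lt hD hagree hlt).exists_cover
  exact ⟨swap a b, ⟨a, b, hswap.1.ne, rfl⟩, oddDiagram_mul_swap hswap,
    invLength_mul_swap hswap.1 hswap.2.2.1 hcover⟩

lemma invLength_le_of_bruhatLE {x y : Perm (Fin n)} (h : bruhatLE x y) :
    invLength x ≤ invLength y := by
  induction h with
  | refl => rfl
  | tail _ hstep ih =>
    obtain ⟨-, -, -, hlt⟩ := hstep
    omega

end OddDiagram

theorem stmt14 {n : ℕ} (v : Equiv.Perm (Fin n))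
    (hmax : ∀ z : Equiv.Perm (Fin n), oddDiagram z = oddDiagram v → bruhatLE z v)
    (w : Equiv.Perm (Fin n)) (hw : oddDiagram w = oddDiagram v) (hne : w ≠ v) :
    ∃ t : Equiv.Perm (Fin n), t.IsSwap ∧ oddDiagram (w * t) = oddDiagram w ∧
      invLength (w * t) = invLength w + 1 := by
  obtain ⟨a, ha, hagree⟩ := exists_eqOn_Iio_ne (DFunLike.coe_injective.ne hne)
  rcases ha.lt_or_gt with hlt | hgt
  · exact exists_swap_cover_of_lt hw hagree hlt
  · obtain ⟨t, -, hDt, hlen⟩ := exists_swap_cover_of_lt hw.symm hagree.symm hgt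
    have := invLength_le_of_bruhatLE (hmax _ hDt)
    omega
end
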